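/- arXiv:1507.08212 — 3 statements merged into one kernel-verified Lean document; each statement's English description precedes it below -/
import Mathlib

section
/- Let H be a finite simple bipartite graph with partite sets X = {x_1,…,x_p} and Y = {y_1,…,y_q} (every edge joining X to Y), let π = (π_1,…,π_p) with π_i = deg_H(x_i) be listed in nonincreasing order, and let ρ = (ρ_1,…,ρ_q) with ρ_j = deg_H(y_j) be listed in nonincreasing order. Then H is the only bipartite graph with partite sets X and Y in which each x_i has degree π_i and each y_j has degree ρ_j (every bipartite graph H' on the same vertex set, with all edges joining X to Y and the same vertex degrees, satisfies H' = H) if and only if ρ = π*, i.e., ρ_i = |{j : π_j ≥ i}| for every i ≥ 1 (with ρ_i = 0 for i > q). -/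
/-- The degree of a vertex: the number of its neighbors. -/
noncomputable def deg {V : Type*} (G : SimpleGraph V) (v : V) : ℕ :=
  (G.neighborSet v).ncard

section helpers
open SimpleGraph Finset


lemma deg_eq {V : Type*} [Fintype V] (G : SimpleGraph V) [DecidableRel G.Adj] (v : V) :
    deg G v = (G.neighborFinset v).card := by
  rw [deg, neighborFinset, Set.ncard_eq_toFinset_card']

def swapGraph {V : Type*} (G : SimpleGraph V) (a b c d : V) : SimpleGraph V :=
  SimpleGraph.fromEdgeSet ((G.edgeSet ∪ {s(a,d), s(b,c)}) \ {s(a,c), s(b,d)})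

set_option maxHeartbeats 1000000 in
lemma swapGraph_adj {V : Type*} (G : SimpleGraph V) (a b c d : V) (u w : V) :
    (swapGraph G a b c d).Adj u w ↔
      ((G.Adj u w ∨ (u=a∧w=d) ∨ (u=d∧w=a) ∨ (u=b∧w=c) ∨ (u=c∧w=b))
        ∧ ¬((u=a∧w=c) ∨ (u=c∧w=a) ∨ (u=b∧w=d) ∨ (u=d∧w=b)) ∧ u ≠ w) := by
  rw [swapGraph, fromEdgeSet_adj]
  simp only [Set.mem_diff, Set.mem_union, Set.mem_insert_iff, Set.mem_singleton_iff,
    mem_edgeSet, Sym2.eq_iff]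
  tauto

lemma card_swap {α : Type*} [DecidableEq α] {s : Finset α} {x y : α}
    (hx : x ∈ s) (hy : y ∉ s) : (insert y (s.erase x)).card = s.card := by
  rw [card_insert_of_notMem (fun h => hy (mem_of_mem_erase h)), card_erase_of_mem hx,
    Nat.sub_add_cancel (Finset.one_le_card.2 ⟨x, hx⟩)]

set_option maxHeartbeats 4000000 in
lemma swap_deg {V : Type*} [Fintype V] [DecidableEq V] (G : SimpleGraph V) (a b c d : V)
    (hab : a ≠ b) (hcd : c ≠ d) (had : a ≠ d) (hbc : b ≠ c)
    (hac : G.Adj a c) (hbd : G.Adj b d) (hnad : ¬ G.Adj a d) (hnbc : ¬ G.Adj b c) :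
    (∀ v, deg (swapGraph G a b c d) v = deg G v) ∧ (swapGraph G a b c d).Adj a d := by
  classical
  have hac' : a ≠ c := hac.ne
  have hbd' : b ≠ d := hbd.ne
  set G' := swapGraph G a b c d with hG'
  have key : ∀ v, (G'.neighborFinset v) =
      (if v = a then insert d ((G.neighborFinset a).erase c)
       else if v = b then insert c ((G.neighborFinset b).erase d)
       else if v = c then insert b ((G.neighborFinset c).erase a)
       else if v = d then insert a ((G.neighborFinset d).erase b)
       else G.neighborFinset v) := by
    intro v
    ext w
    rw [mem_neighborFinset, hG', swapGraph_adj]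
    split_ifs with h1 h2 h3 h4 <;>
      simp only [mem_insert, mem_erase, mem_neighborFinset] <;> subst_vars <;>
      aesop
  constructor
  · intro v
    rw [deg_eq, deg_eq, key v]
    split_ifs with h1 h2 h3 h4 <;> subst_vars
    · exact card_swap ((mem_neighborFinset _ _ _).2 hac)
        (fun h => hnad ((mem_neighborFinset _ _ _).1 h))
    · exact card_swap ((mem_neighborFinset _ _ _).2 hbd)
        (fun h => hnbc ((mem_neighborFinset _ _ _).1 h))
    · exact card_swap ((mem_neighborFinset _ _ _).2 hac.symm)
        (fun h => hnbc ((mem_neighborFinset _ _ _).1 h).symm)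
    · exact card_swap ((mem_neighborFinset _ _ _).2 hbd.symm)
        (fun h => hnad ((mem_neighborFinset _ _ _).1 h).symm)
    · rfl
  · have hk := key a
    rw [if_pos rfl] at hk
    have hd : d ∈ G'.neighborFinset a := by rw [hk]; exact mem_insert_self _ _
    exact (mem_neighborFinset _ _ _).1 hd

lemma sum_fin_lt (n k : ℕ) (f : ℕ → ℕ) (hk : k ≤ n) :
    ∑ i ∈ (Finset.univ : Finset (Fin n)).filter (fun i => i.val < k), f (i.val + 1)
      = ∑ j ∈ Finset.Icc 1 k, f j := by
  rw [Finset.sum_filter, Fin.sum_univ_eq_sum_range (fun i => if i < k then f (i + 1) else 0),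
    ← Finset.sum_filter]
  have h1 : (Finset.range n).filter (· < k) = Finset.range k := by
    ext x; simp only [Finset.mem_filter, Finset.mem_range]; omega
  rw [h1, show Finset.Icc 1 k = Finset.Ico 1 (k+1) by rw [Finset.Ico_add_one_right_eq_Icc],
    Finset.sum_Ico_eq_sum_range]
  simp [Nat.add_comm]

lemma card_filter_lt (q k : ℕ) :
    ((Finset.univ : Finset (Fin q)).filter (fun j => j.val < k)).card = min k q := by
  rw [Finset.card_filter, Fin.sum_univ_eq_sum_range (fun i => if i < k then 1 else 0),
    ← Finset.card_filter]
  have h1 : (Finset.range q).filter (· < k) = Finset.range (min k q) := by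
    ext x; simp only [Finset.mem_filter, Finset.mem_range]; omega
  rw [h1, Finset.card_range]

lemma card_shift (p : ℕ) (P : ℕ → Prop) [DecidablePred P] :
    ((Finset.univ : Finset (Fin p)).filter (fun i => P (i.val + 1))).card
      = ((Finset.Icc 1 p).filter P).card := by
  rw [Finset.card_filter, Finset.card_filter]
  have := sum_fin_lt p p (fun j => if P j then 1 else 0) le_rfl
  rw [Finset.filter_true_of_mem (fun i _ => i.isLt)] at this
  simpa using this

lemma conj_sum (p k : ℕ) (f : ℕ → ℕ) :
    ∑ j ∈ Finset.Icc 1 k, ((Finset.Icc 1 p).filter (fun i => j ≤ f i)).card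
      = ∑ i ∈ Finset.Icc 1 p, min (f i) k := by
  simp only [Finset.card_filter]
  rw [Finset.sum_comm]
  refine Finset.sum_congr rfl fun i _ => ?_
  rw [← Finset.card_filter]
  have h1 : (Finset.Icc 1 k).filter (fun j => j ≤ f i) = Finset.Icc 1 (min (f i) k) := by
    ext x; simp only [Finset.mem_filter, Finset.mem_Icc]; omega
  rw [h1, Nat.card_Icc]; omega

lemma double_count (p q : ℕ) (G : SimpleGraph (Fin p ⊕ Fin q)) [DecidableRel G.Adj] (k : ℕ) :
    ∑ j ∈ (Finset.univ : Finset (Fin q)).filter (fun j => j.val < k),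
      ((Finset.univ : Finset (Fin p)).filter (fun i => G.Adj (Sum.inl i) (Sum.inr j))).card
    = ∑ i : Fin p, ((Finset.univ : Finset (Fin q)).filter
        (fun j => G.Adj (Sum.inl i) (Sum.inr j) ∧ j.val < k)).card := by
  simp only [Finset.card_filter]
  rw [Finset.sum_filter, Finset.sum_comm]
  refine Finset.sum_congr rfl fun j _ => ?_
  by_cases h : j.val < k <;> simp [h]
lemma degL {p q : ℕ} (G : SimpleGraph (Fin p ⊕ Fin q)) [DecidableRel G.Adj]
    (hb : ∀ u w, G.Adj u w →
      ((u.isLeft = true ∧ w.isLeft = false) ∨ (u.isLeft = false ∧ w.isLeft = true)))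
    (i : Fin p) :
    deg G (Sum.inl i)
      = ((Finset.univ : Finset (Fin q)).filter (fun j => G.Adj (Sum.inl i) (Sum.inr j))).card := by
  rw [deg_eq]
  have himg : G.neighborFinset (Sum.inl i)
      = ((Finset.univ : Finset (Fin q)).filter
          (fun j => G.Adj (Sum.inl i) (Sum.inr j))).image Sum.inr := by
    ext w
    rw [mem_neighborFinset]
    cases w with
    | inl w' =>
        simp only [Finset.mem_image, Finset.mem_filter]
        constructor
        · intro h
          rcases hb _ _ h with ⟨_, h2⟩ | ⟨h2, _⟩ <;> simp at h2
        · rintro ⟨x, _, hx⟩; simp at hx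
    | inr w' => simp
  rw [himg, Finset.card_image_of_injective _ Sum.inr_injective]

lemma degR {p q : ℕ} (G : SimpleGraph (Fin p ⊕ Fin q)) [DecidableRel G.Adj]
    (hb : ∀ u w, G.Adj u w →
      ((u.isLeft = true ∧ w.isLeft = false) ∨ (u.isLeft = false ∧ w.isLeft = true)))
    (j : Fin q) :
    deg G (Sum.inr j)
      = ((Finset.univ : Finset (Fin p)).filter (fun i => G.Adj (Sum.inl i) (Sum.inr j))).card := by
  rw [deg_eq]
  have himg : G.neighborFinset (Sum.inr j)
      = ((Finset.univ : Finset (Fin p)).filter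
          (fun i => G.Adj (Sum.inl i) (Sum.inr j))).image Sum.inl := by
    ext w
    rw [mem_neighborFinset]
    cases w with
    | inl w' => simp [adj_comm]
    | inr w' =>
        simp only [Finset.mem_image, Finset.mem_filter]
        constructor
        · intro h
          rcases hb _ _ h with ⟨h2, _⟩ | ⟨_, h2⟩ <;> simp at h2
        · rintro ⟨x, _, hx⟩; simp at hx
  rw [himg, Finset.card_image_of_injective _ Sum.inl_injective]
lemma forced {p q : ℕ} (π ρ : ℕ → ℕ) (G : SimpleGraph (Fin p ⊕ Fin q)) [DecidableRel G.Adj]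
    (hb : ∀ u w, G.Adj u w →
      ((u.isLeft = true ∧ w.isLeft = false) ∨ (u.isLeft = false ∧ w.isLeft = true)))
    (hdegL : ∀ i : Fin p, deg G (Sum.inl i) = π (i.val + 1))
    (hdegR : ∀ j : Fin q, deg G (Sum.inr j) = ρ (j.val + 1))
    (hρzero : ∀ j, q < j → ρ j = 0)
    (hconj : ∀ i, 1 ≤ i → ρ i = ((Finset.Icc 1 p).filter (fun j => i ≤ π j)).card) :
    ∀ (i : Fin p) (j : Fin q), G.Adj (Sum.inl i) (Sum.inr j) ↔ j.val < π (i.val + 1) := by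
  have hπq : ∀ i : Fin p, π (i.val + 1) ≤ q := by
    intro i
    by_contra h
    push_neg at h
    have h0 := hconj (q + 1) (by omega)
    rw [hρzero (q + 1) (by omega)] at h0
    have hmem : (i.val + 1) ∈ (Finset.Icc 1 p).filter (fun j => q + 1 ≤ π j) := by
      simp only [Finset.mem_filter, Finset.mem_Icc]
      exact ⟨⟨by omega, by omega⟩, by omega⟩
    have := Finset.card_pos.2 ⟨_, hmem⟩
    omega
  -- pointwise equality for every k ≤ q
  have hpt : ∀ k, k ≤ q → ∀ i : Fin p,
      ((Finset.univ : Finset (Fin q)).filter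
        (fun j => G.Adj (Sum.inl i) (Sum.inr j) ∧ j.val < k)).card = min (π (i.val + 1)) k := by
    intro k hk
    have hle : ∀ i ∈ (Finset.univ : Finset (Fin p)),
        ((Finset.univ : Finset (Fin q)).filter
          (fun j => G.Adj (Sum.inl i) (Sum.inr j) ∧ j.val < k)).card
          ≤ min (π (i.val + 1)) k := by
      intro i _
      refine le_min ?_ ?_
      · calc ((Finset.univ : Finset (Fin q)).filter
              (fun j => G.Adj (Sum.inl i) (Sum.inr j) ∧ j.val < k)).card
            ≤ ((Finset.univ : Finset (Fin q)).filter
              (fun j => G.Adj (Sum.inl i) (Sum.inr j))).card :=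
              Finset.card_le_card (fun x hx => by
                simp only [Finset.mem_filter] at hx ⊢; exact ⟨hx.1, hx.2.1⟩)
          _ = deg G (Sum.inl i) := (degL G hb i).symm
          _ = π (i.val + 1) := hdegL i
      · calc ((Finset.univ : Finset (Fin q)).filter
              (fun j => G.Adj (Sum.inl i) (Sum.inr j) ∧ j.val < k)).card
            ≤ ((Finset.univ : Finset (Fin q)).filter (fun j => j.val < k)).card :=
              Finset.card_le_card (fun x hx => by
                simp only [Finset.mem_filter] at hx ⊢; exact ⟨hx.1, hx.2.2⟩)
          _ = min k q := card_filter_lt q k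
          _ ≤ k := min_le_left _ _
    have hsum : ∑ i : Fin p, ((Finset.univ : Finset (Fin q)).filter
          (fun j => G.Adj (Sum.inl i) (Sum.inr j) ∧ j.val < k)).card
        = ∑ i : Fin p, min (π (i.val + 1)) k := by
      rw [← double_count p q G k]
      have e1 : ∑ j ∈ (Finset.univ : Finset (Fin q)).filter (fun j => j.val < k),
          ((Finset.univ : Finset (Fin p)).filter (fun i => G.Adj (Sum.inl i) (Sum.inr j))).card
          = ∑ j ∈ (Finset.univ : Finset (Fin q)).filter (fun j => j.val < k), ρ (j.val + 1) := by
        refine Finset.sum_congr rfl fun j _ => ?_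
        rw [← degR G hb j, hdegR j]
      have e2 : ∑ j ∈ (Finset.univ : Finset (Fin q)).filter (fun j => j.val < k), ρ (j.val + 1)
          = ∑ j ∈ Finset.Icc 1 k, ρ j := sum_fin_lt q k ρ hk
      have e3 : ∑ j ∈ Finset.Icc 1 k, ρ j
          = ∑ j ∈ Finset.Icc 1 k, ((Finset.Icc 1 p).filter (fun i => j ≤ π i)).card := by
        refine Finset.sum_congr rfl fun j hj => ?_
        exact hconj j (Finset.mem_Icc.1 hj).1
      have e4 := conj_sum p k π
      have e5 : ∑ i ∈ Finset.Icc 1 p, min (π i) k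
          = ∑ i : Fin p, min (π (i.val + 1)) k := by
        rw [← sum_fin_lt p p (fun i => min (π i) k) le_rfl,
          Finset.filter_true_of_mem (fun i _ => i.isLt)]
      rw [e1, e2, e3, e4, e5]
    intro i
    exact (Finset.sum_eq_sum_iff_of_le hle).1 hsum i (Finset.mem_univ i)
  intro i j
  set k := π (i.val + 1) with hkdef
  have hk : k ≤ q := hπq i
  have heq := hpt k hk i
  rw [min_self] at heq
  have hcardA : ((Finset.univ : Finset (Fin q)).filter
      (fun j => G.Adj (Sum.inl i) (Sum.inr j))).card = k := by
    rw [← degL G hb i, hdegL i]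
  have hsub1 : ((Finset.univ : Finset (Fin q)).filter
      (fun j => G.Adj (Sum.inl i) (Sum.inr j) ∧ j.val < k))
      ⊆ ((Finset.univ : Finset (Fin q)).filter (fun j => G.Adj (Sum.inl i) (Sum.inr j))) :=
    fun x hx => by simp only [Finset.mem_filter] at hx ⊢; exact ⟨hx.1, hx.2.1⟩
  have hA : ((Finset.univ : Finset (Fin q)).filter
      (fun j => G.Adj (Sum.inl i) (Sum.inr j) ∧ j.val < k))
      = ((Finset.univ : Finset (Fin q)).filter (fun j => G.Adj (Sum.inl i) (Sum.inr j))) :=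
    Finset.eq_of_subset_of_card_le hsub1 (by rw [heq, hcardA])
  have hsub2 : ((Finset.univ : Finset (Fin q)).filter
      (fun j => G.Adj (Sum.inl i) (Sum.inr j) ∧ j.val < k))
      ⊆ ((Finset.univ : Finset (Fin q)).filter (fun j => j.val < k)) :=
    fun x hx => by simp only [Finset.mem_filter] at hx ⊢; exact ⟨hx.1, hx.2.2⟩
  have hB : ((Finset.univ : Finset (Fin q)).filter
      (fun j => G.Adj (Sum.inl i) (Sum.inr j) ∧ j.val < k))
      = ((Finset.univ : Finset (Fin q)).filter (fun j => j.val < k)) := by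
    refine Finset.eq_of_subset_of_card_le hsub2 ?_
    rw [heq, card_filter_lt]
    omega
  constructor
  · intro hadj
    have : j ∈ ((Finset.univ : Finset (Fin q)).filter
        (fun j => G.Adj (Sum.inl i) (Sum.inr j) ∧ j.val < k)) := by
      rw [hA]; simp [hadj]
    simp only [Finset.mem_filter] at this
    exact this.2.2
  · intro hlt
    have : j ∈ ((Finset.univ : Finset (Fin q)).filter
        (fun j => G.Adj (Sum.inl i) (Sum.inr j) ∧ j.val < k)) := by
      rw [hB]; simp [hlt]
    simp only [Finset.mem_filter] at this
    exact this.2.1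
end helpers

/-- A bipartitioned graph `H` with partite sets `X = Fin p` (the left summands) and
`Y = Fin q` (the right summands) and nonincreasing degree lists `π` on `X` and `ρ`
on `Y` (given `1`-indexed, zero beyond their lengths) is the unique bipartitioned
graph with partite sets `X`, `Y` having these degrees iff `ρ = π*`, i.e.
`ρ i = |{j : π j ≥ i}|` for every `i ≥ 1`. -/
theorem stmt14 (p q : ℕ) (H : SimpleGraph (Fin p ⊕ Fin q))
    (hbip : ∀ u w, H.Adj u w →
      ((u.isLeft = true ∧ w.isLeft = false) ∨ (u.isLeft = false ∧ w.isLeft = true)))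
    (π ρ : ℕ → ℕ)
    (hπdeg : ∀ i : Fin p, deg H (Sum.inl i) = π ((i : ℕ) + 1))
    (hρdeg : ∀ j : Fin q, deg H (Sum.inr j) = ρ ((j : ℕ) + 1))
    (hπmono : ∀ i j, 1 ≤ i → i ≤ j → π j ≤ π i)
    (hρmono : ∀ i j, 1 ≤ i → i ≤ j → ρ j ≤ ρ i)
    (hπzero : ∀ j, p < j → π j = 0)
    (hρzero : ∀ j, q < j → ρ j = 0) :
    (∀ H' : SimpleGraph (Fin p ⊕ Fin q),
        (∀ u w, H'.Adj u w →
          ((u.isLeft = true ∧ w.isLeft = false) ∨ (u.isLeft = false ∧ w.isLeft = true))) →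
        (∀ v, deg H' v = deg H v) → H' = H) ↔
      ∀ i : ℕ, 1 ≤ i → ρ i = ((Finset.Icc 1 p).filter (fun j => i ≤ π j)).card := by
  classical
  constructor
  · -- uniqueness → conjugate formula
    intro huniq
    set NA : Fin p → Finset (Fin q) :=
      fun i => Finset.univ.filter (fun j => H.Adj (Sum.inl i) (Sum.inr j)) with hNA
    set NB : Fin q → Finset (Fin p) :=
      fun j => Finset.univ.filter (fun i => H.Adj (Sum.inl i) (Sum.inr j)) with hNB
    have hmemNA : ∀ i j, j ∈ NA i ↔ H.Adj (Sum.inl i) (Sum.inr j) := by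
      intro i j; rw [hNA]; simp
    have hmemNB : ∀ i j, i ∈ NB j ↔ H.Adj (Sum.inl i) (Sum.inr j) := by
      intro i j; rw [hNB]; simp
    have hcardNA : ∀ i, (NA i).card = π (i.val + 1) := fun i =>
      ((degL H hbip i).symm.trans (hπdeg i))
    have hcardNB : ∀ j, (NB j).card = ρ (j.val + 1) := fun j =>
      ((degR H hbip j).symm.trans (hρdeg j))
    -- nested neighborhoods on the left
    have hnestL : ∀ a b : Fin p, NA a ⊆ NA b ∨ NA b ⊆ NA a := by
      intro a b
      by_contra hcon
      push_neg at hcon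
      obtain ⟨hn1, hn2⟩ := hcon
      obtain ⟨c, hc1, hc2⟩ := Finset.not_subset.1 hn1
      obtain ⟨d, hd1, hd2⟩ := Finset.not_subset.1 hn2
      rw [hmemNA] at hc1 hd1
      rw [hmemNA] at hc2 hd2
      have hab : a ≠ b := fun h => hc2 (h ▸ hc1)
      have hcd : c ≠ d := fun h => hd2 (h ▸ hc1)
      obtain ⟨hdegs, hadj'⟩ := swap_deg H (Sum.inl a) (Sum.inl b) (Sum.inr c) (Sum.inr d)
        (fun h => hab (Sum.inl_injective h)) (fun h => hcd (Sum.inr_injective h))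
        (Sum.inl_ne_inr) (Sum.inl_ne_inr) hc1 hd1 hd2 hc2
      have hbip' : ∀ u w, (swapGraph H (Sum.inl a) (Sum.inl b) (Sum.inr c) (Sum.inr d)).Adj u w →
          ((u.isLeft = true ∧ w.isLeft = false) ∨ (u.isLeft = false ∧ w.isLeft = true)) := by
        intro u w h
        rw [swapGraph_adj] at h
        rcases h.1 with h' | ⟨rfl, rfl⟩ | ⟨rfl, rfl⟩ | ⟨rfl, rfl⟩ | ⟨rfl, rfl⟩
        · exact hbip u w h'
        all_goals simp
      have heq := huniq _ hbip' hdegs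
      rw [heq] at hadj'
      exact hd2 hadj'
    -- nested neighborhoods on the right
    have hnestR : ∀ a b : Fin q, NB a ⊆ NB b ∨ NB b ⊆ NB a := by
      intro a b
      by_contra hcon
      push_neg at hcon
      obtain ⟨hn1, hn2⟩ := hcon
      obtain ⟨c, hc1, hc2⟩ := Finset.not_subset.1 hn1
      obtain ⟨d, hd1, hd2⟩ := Finset.not_subset.1 hn2
      rw [hmemNB] at hc1 hd1
      rw [hmemNB] at hc2 hd2
      have hab : a ≠ b := fun h => hc2 (h ▸ hc1)
      have hcd : c ≠ d := fun h => hd2 (h ▸ hc1)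
      obtain ⟨hdegs, hadj'⟩ := swap_deg H (Sum.inr a) (Sum.inr b) (Sum.inl c) (Sum.inl d)
        (fun h => hab (Sum.inr_injective h)) (fun h => hcd (Sum.inl_injective h))
        (Sum.inr_ne_inl) (Sum.inr_ne_inl) hc1.symm hd1.symm
        (fun h => hd2 h.symm) (fun h => hc2 h.symm)
      have hbip' : ∀ u w, (swapGraph H (Sum.inr a) (Sum.inr b) (Sum.inl c) (Sum.inl d)).Adj u w →
          ((u.isLeft = true ∧ w.isLeft = false) ∨ (u.isLeft = false ∧ w.isLeft = true)) := by
        intro u w h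
        rw [swapGraph_adj] at h
        rcases h.1 with h' | ⟨rfl, rfl⟩ | ⟨rfl, rfl⟩ | ⟨rfl, rfl⟩ | ⟨rfl, rfl⟩
        · exact hbip u w h'
        all_goals simp
      have heq := huniq _ hbip' hdegs
      rw [heq] at hadj'
      exact hd2 hadj'.symm
    -- chains
    have hchainA : ∀ i i' : Fin p, i ≤ i' → NA i' ⊆ NA i := by
      intro i i' hii
      have hval : i.val ≤ i'.val := hii
      rcases hnestL i i' with h | h
      · have hcard : (NA i').card ≤ (NA i).card := by
          rw [hcardNA, hcardNA]
          exact hπmono _ _ (by omega) (by omega)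
        have heq := Finset.eq_of_subset_of_card_le h hcard
        rw [heq]
      · exact h
    have hchainB : ∀ j j' : Fin q, j ≤ j' → NB j' ⊆ NB j := by
      intro j j' hjj
      have hval : j.val ≤ j'.val := hjj
      rcases hnestR j j' with h | h
      · have hcard : (NB j').card ≤ (NB j).card := by
          rw [hcardNB, hcardNB]
          exact hρmono _ _ (by omega) (by omega)
        have heq := Finset.eq_of_subset_of_card_le h hcard
        rw [heq]
      · exact h
    -- characterization of adjacency
    have hchar : ∀ (i : Fin p) (j : Fin q),
        H.Adj (Sum.inl i) (Sum.inr j) ↔ j.val < π (i.val + 1) := by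
      intro i j
      constructor
      · intro h
        have hsub : Finset.univ.filter (fun x : Fin q => x.val < j.val + 1) ⊆ NA i := by
          intro x hx
          simp only [Finset.mem_filter, Finset.mem_univ, true_and] at hx
          have hxj : x ≤ j := by omega
          rw [hmemNA, ← hmemNB]
          exact hchainB x j hxj ((hmemNB i j).2 h)
        have hcard := Finset.card_le_card hsub
        rw [card_filter_lt, hcardNA] at hcard
        have : j.val + 1 ≤ q := j.isLt
        omega
      · intro hlt
        by_contra hnadj
        have hsub : NA i ⊆ Finset.univ.filter (fun x : Fin q => x.val < j.val) := by
          intro x hx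
          simp only [Finset.mem_filter, Finset.mem_univ, true_and]
          by_contra hge
          push_neg at hge
          have hjx : j ≤ x := hge
          rw [hmemNA] at hx
          exact hnadj ((hmemNB i j).1 (hchainB j x hjx ((hmemNB i x).2 hx)))
        have hcard := Finset.card_le_card hsub
        rw [card_filter_lt, hcardNA] at hcard
        omega
    -- conclude
    intro i hi
    by_cases hiq : i ≤ q
    · have hq0 : 0 < q := by omega
      have hlt : i - 1 < q := by omega
      have h1 : ρ i = (NB ⟨i - 1, hlt⟩).card := by
        rw [hcardNB]
        show ρ i = ρ (i - 1 + 1)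
        congr 1
        omega
      have h2 : NB ⟨i - 1, hlt⟩ = Finset.univ.filter (fun i' : Fin p => i ≤ π (i'.val + 1)) := by
        ext x
        rw [hmemNB, hchar x ⟨i - 1, hlt⟩]
        simp only [Finset.mem_filter, Finset.mem_univ, true_and]
        have hv : ((⟨i - 1, hlt⟩ : Fin q) : ℕ) = i - 1 := rfl
        omega
      rw [h1, h2, card_shift p (fun n => i ≤ π n)]
    · rw [hρzero i (by omega)]
      refine (Finset.card_eq_zero.2 (Finset.filter_eq_empty_iff.2 ?_)).symm
      intro x hx
      rw [Finset.mem_Icc] at hx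
      have hx0 : π x ≤ q := by
        have hlt : x - 1 < p := by omega
        have hd := hcardNA ⟨x - 1, hlt⟩
        have hcu : (NA ⟨x - 1, hlt⟩).card ≤ q := by
          calc (NA ⟨x - 1, hlt⟩).card ≤ (Finset.univ : Finset (Fin q)).card :=
            Finset.card_le_univ _
          _ = q := by simp
        simp only at hd
        have : x - 1 + 1 = x := by omega
        rw [this] at hd
        omega
      omega
  · -- conjugate formula → uniqueness
    intro hconj H' hb' hdeg'
    have e1 := forced π ρ H' hb' (fun i => by rw [hdeg', hπdeg])
      (fun j => by rw [hdeg', hρdeg]) hρzero hconj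
    have e2 := forced π ρ H hbip hπdeg hρdeg hρzero hconj
    ext u w
    cases u with
    | inl a =>
      cases w with
      | inl b =>
        refine iff_of_false (fun h => ?_) (fun h => ?_)
        · rcases hb' _ _ h with ⟨_, h2⟩ | ⟨h2, _⟩ <;> simp at h2
        · rcases hbip _ _ h with ⟨_, h2⟩ | ⟨h2, _⟩ <;> simp at h2
      | inr b => exact (e1 a b).trans (e2 a b).symm
    | inr a =>
      cases w with
      | inl b =>
        rw [H'.adj_comm, H.adj_comm]
        exact (e1 b a).trans (e2 b a).symm
      | inr b =>
        refine iff_of_false (fun h => ?_) (fun h => ?_)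
        · rcases hb' _ _ h with ⟨h2, _⟩ | ⟨_, h2⟩ <;> simp at h2
        · rcases hbip _ _ h with ⟨h2, _⟩ | ⟨_, h2⟩ <;> simp at h2
end

section
/- Let H be a finite simple bipartite graph with fixed partite sets X and Y (every edge joining X to Y). Then H is a difference graph (there exist a real number t and a weight function w on the vertices with |w(v)| ≤ t for every vertex v, such that two distinct vertices are adjacent if and only if the absolute value of the difference of their weights is at least t) if and only if H is the only bipartite graph with partite sets X and Y in which every vertex has its given degree (every bipartite graph H' on the same vertex set, with all edges joining X to Y and with deg_{H'}(v) = deg_H(v) for every vertex v, satisfies H' = H). -/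
def IsDifference {V : Type*} (H : SimpleGraph V) : Prop :=
  ∃ (t : ℝ) (w : V → ℝ), (∀ v, |w v| ≤ t) ∧
    ∀ u v : V, u ≠ v → (H.Adj u v ↔ t ≤ |w u - w v|)

/-!
Both sides are equivalent to the neighbourhoods of the vertices of `X` forming a chain under
inclusion.

If they do not, there are edges `ab`, `a'b'` with `ab'`, `a'b` non-edges (`a, a' ∈ X`,
`b, b' ∈ Y`). Replacing the first two edges by the second two (a 2-switch) preserves every
degree. And difference weights are impossible: the sum of `t ≤ |w a - w b|` and
`t ≤ |w a' - w b'|` contradicts either `|w a - w a'|, |w b - w b'| < t` or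
`|w a - w b'|, |w a' - w b| < t`.

If they do, `a ∈ X` is adjacent to `b` exactly when `deg a` reaches a threshold depending only
on `b`. This gives integer weights `p` with `p a + p b` never zero, and positive exactly on the
edges; difference weights are read off from `p`. Moreover `H` is then the unique maximiser of
`∑ (p x + p y)` over the edges, among all graphs bipartite with respect to `X`, `Y`, while this
sum equals `∑ deg v * p v` and so depends only on the degrees.
-/

open SimpleGraph Set

lemma abs_crossing {t a a' b b' : ℝ} (ha : |a - a'| < t) (hb : |b - b'| < t)
    (h₁ : t ≤ |a - b|) (h₂ : t ≤ |a' - b'|) : t ≤ |a - b'| ∨ t ≤ |a' - b| := by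
  by_contra! h
  simp only [abs_lt] at ha hb h
  rcases le_abs'.1 h₁ with h₁ | h₁ <;> rcases le_abs'.1 h₂ with h₂ | h₂ <;> linarith

lemma Set.subset_of_ncard_le_of_total {α : Type*} {s t : Set α} (hs : s.Finite)
    (h : s ⊆ t ∨ t ⊆ s) (hst : s.ncard ≤ t.ncard) : s ⊆ t :=
  h.elim id fun hts => (eq_of_subset_of_ncard_le hts hst hs).ge

section

variable {V : Type*}

namespace SimpleGraph

section Switch

variable (G : SimpleGraph V) (x₁ x₂ x₃ x₄ : V)

def switch : SimpleGraph V :=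
  G \ (edge x₁ x₂ ⊔ edge x₃ x₄) ⊔ (edge x₂ x₃ ⊔ edge x₄ x₁)

lemma switch_rotate : G.switch x₁ x₂ x₃ x₄ = G.switch x₃ x₄ x₁ x₂ := by
  simp only [switch, sup_comm (edge x₁ x₂), sup_comm (edge x₂ x₃)]

lemma switch_reflect : G.switch x₁ x₂ x₃ x₄ = G.switch x₂ x₁ x₄ x₃ := by
  simp only [switch, edge_comm x₁ x₂, edge_comm x₃ x₄, edge_comm x₂ x₃, edge_comm x₄ x₁,
    sup_comm (edge x₃ x₂)]

lemma switch_le : G.switch x₁ x₂ x₃ x₄ ≤ G ⊔ (edge x₂ x₃ ⊔ edge x₄ x₁) :=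
  sup_le_sup_right sdiff_le _

variable {G x₁ x₂ x₃ x₄}

lemma switch_adj_of_ne (h : x₄ ≠ x₁) : (G.switch x₁ x₂ x₃ x₄).Adj x₄ x₁ :=
  Or.inr (Or.inr ((edge_adj ..).2 ⟨Or.inl ⟨rfl, rfl⟩, h⟩))

lemma neighborSet_switch_left (h₂ : x₁ ≠ x₂) (h₃ : x₁ ≠ x₃) (h₄ : x₁ ≠ x₄) :
    (G.switch x₁ x₂ x₃ x₄).neighborSet x₁ = insert x₄ (G.neighborSet x₁ \ {x₂}) := by
  ext y
  simp only [switch, neighborSet_sup, neighborSet_sdiff, mem_union, mem_sdiff, mem_neighborSet,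
    edge_adj, mem_insert_iff, mem_singleton_iff]
  grind

lemma neighborSet_switch_of_ne {x : V} (h₁ : x ≠ x₁) (h₂ : x ≠ x₂) (h₃ : x ≠ x₃)
    (h₄ : x ≠ x₄) : (G.switch x₁ x₂ x₃ x₄).neighborSet x = G.neighborSet x := by
  ext y
  simp only [switch, neighborSet_sup, neighborSet_sdiff, mem_union, mem_sdiff, mem_neighborSet,
    edge_adj]
  grind

lemma deg_switch_left (h₂ : x₁ ≠ x₂) (h₃ : x₁ ≠ x₃) (h₄ : x₁ ≠ x₄) (h₁₂ : G.Adj x₁ x₂)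
    (h₄₁ : ¬G.Adj x₄ x₁) : deg (G.switch x₁ x₂ x₃ x₄) x₁ = deg G x₁ := by
  rw [deg, neighborSet_switch_left h₂ h₃ h₄]
  exact ncard_exchange (fun h => h₄₁ h.symm) h₁₂

lemma deg_switch (h₁₂ : x₁ ≠ x₂) (h₁₃ : x₁ ≠ x₃) (h₁₄ : x₁ ≠ x₄) (h₂₃ : x₂ ≠ x₃)
    (h₂₄ : x₂ ≠ x₄) (h₃₄ : x₃ ≠ x₄) (ha₁₂ : G.Adj x₁ x₂) (ha₃₄ : G.Adj x₃ x₄)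
    (hn₂₃ : ¬G.Adj x₂ x₃) (hn₄₁ : ¬G.Adj x₄ x₁) (x : V) :
    deg (G.switch x₁ x₂ x₃ x₄) x = deg G x := by
  by_cases hx₁ : x = x₁
  · subst hx₁
    exact deg_switch_left h₁₂ h₁₃ h₁₄ ha₁₂ hn₄₁
  by_cases hx₂ : x = x₂
  · subst hx₂
    rw [switch_reflect]
    exact deg_switch_left h₁₂.symm h₂₄ h₂₃ ha₁₂.symm (fun h => hn₂₃ h.symm)
  by_cases hx₃ : x = x₃
  · subst hx₃
    rw [switch_rotate]
    exact deg_switch_left h₃₄ h₁₃.symm h₂₃.symm ha₃₄ hn₂₃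
  by_cases hx₄ : x = x₄
  · subst hx₄
    rw [switch_rotate, switch_reflect]
    exact deg_switch_left h₃₄.symm h₂₄.symm h₁₄.symm ha₃₄.symm (fun h => hn₄₁ h.symm)
  rw [deg, deg, neighborSet_switch_of_ne hx₁ hx₂ hx₃ hx₄]

end Switch

section WeightSum

open Finset

variable [Fintype V] {R : Type*} [AddCommMonoid R]

lemma deg_eq_card_filter (G : SimpleGraph V) [DecidableRel G.Adj] (v : V) :
    deg G v = #{w | G.Adj v w} := by
  rw [deg, ncard_eq_toFinset_card', ← neighborFinset_def, neighborFinset_eq_filter]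

lemma sum_sum_ite_adj_add (G : SimpleGraph V) [DecidableRel G.Adj] (p : V → R) :
    ∑ x, ∑ y, (if G.Adj x y then p x + p y else 0) = 2 • ∑ x, deg G x • p x := by
  have hleft : ∑ x, ∑ y, (if G.Adj x y then p x else 0) = ∑ x, deg G x • p x := by
    simp only [deg_eq_card_filter, ← sum_filter, sum_const]
  have hright : ∑ x, ∑ y, (if G.Adj x y then p y else 0) = ∑ x, deg G x • p x := by
    rw [sum_comm, ← hleft]
    simp only [G.adj_comm]
  simp only [ite_add_zero, sum_add_distrib, hleft, hright, two_nsmul]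

theorem eq_of_deg_eq_of_weight [PartialOrder R] [IsOrderedCancelAddMonoid R]
    {G H : SimpleGraph V} (p : V → R) (hH : ∀ x y, H.Adj x y → 0 < p x + p y)
    (hG : ∀ x y, G.Adj x y → ¬H.Adj x y → p x + p y < 0) (hdeg : ∀ v, deg G v = deg H v) :
    G = H := by
  classical
  have hle : ∀ x y,
      (if G.Adj x y then p x + p y else 0) ≤ if H.Adj x y then p x + p y else 0 := by
    intro x y
    split_ifs with hGxy hHxy hHxy
    exacts [le_rfl, (hG x y hGxy hHxy).le, (hH x y hHxy).le, le_rfl]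
  have hlt : ∀ x y, ¬(G.Adj x y ↔ H.Adj x y) →
      (if G.Adj x y then p x + p y else 0) < if H.Adj x y then p x + p y else 0 := by
    intro x y hne
    split_ifs with hGxy hHxy hHxy
    exacts [absurd (iff_of_true hGxy hHxy) hne, hG x y hGxy hHxy, hH x y hHxy,
      absurd (iff_of_false hGxy hHxy) hne]
  ext x y
  by_contra hne
  have hsum := sum_lt_sum (fun x _ => sum_le_sum fun y _ => hle x y)
    ⟨x, mem_univ x, sum_lt_sum (fun y _ => hle x y) ⟨y, mem_univ y, hlt x y hne⟩⟩
  simp only [sum_sum_ite_adj_add, hdeg] at hsum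
  exact hsum.false

end WeightSum

end SimpleGraph

variable {X Y : Set V} {H : SimpleGraph V}

lemma SimpleGraph.IsBipartiteWith.not_adj_of_mem_left (hH : H.IsBipartiteWith X Y) {a a' : V}
    (ha : a ∈ X) (ha' : a' ∈ X) : ¬H.Adj a a' :=
  fun h => hH.disjoint.notMem_of_mem_left ha' (hH.mem_of_mem_adj ha h)

lemma SimpleGraph.IsBipartiteWith.not_adj_of_mem_right (hH : H.IsBipartiteWith X Y) {b b' : V}
    (hb : b ∈ Y) (hb' : b' ∈ Y) : ¬H.Adj b b' :=
  hH.symm.not_adj_of_mem_left hb hb'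

lemma isChain_neighborSet_of_forall_adj {s : Set V}
    (h : ∀ a ∈ s, ∀ a' ∈ s, ∀ b b', a ≠ a' → b ≠ b' → H.Adj a b → H.Adj a' b' →
      H.Adj a b' ∨ H.Adj a' b) :
    IsChain (· ⊆ ·) (H.neighborSet '' s) := by
  rintro _ ⟨a, ha, rfl⟩ _ ⟨a', ha', rfl⟩ -
  by_contra! hne
  obtain ⟨b, hab, ha'b⟩ := not_subset.1 hne.1
  obtain ⟨b', ha'b', hab'⟩ := not_subset.1 hne.2
  have haa' : a ≠ a' := by rintro rfl; exact ha'b hab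
  have hbb' : b ≠ b' := by rintro rfl; exact hab' hab
  exact (h a ha a' ha' b b' haa' hbb' hab ha'b').elim hab' ha'b

lemma IsDifference.isChain_neighborSet (hH : H.IsBipartiteWith X Y) (hd : IsDifference H) :
    IsChain (· ⊆ ·) (H.neighborSet '' X) := by
  obtain ⟨t, w, -, hw⟩ := hd
  refine isChain_neighborSet_of_forall_adj fun a ha a' ha' b b' haa' hbb' hab ha'b' => ?_
  by_contra! ⟨hab', ha'b⟩
  have hb := hH.mem_of_mem_adj ha hab
  have hb' := hH.mem_of_mem_adj ha' ha'b'
  have hX : |w a - w a'| < t := not_le.1 fun hle =>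
    hH.not_adj_of_mem_left ha ha' ((hw a a' haa').2 hle)
  have hY : |w b - w b'| < t := not_le.1 fun hle =>
    hH.not_adj_of_mem_right hb hb' ((hw b b' hbb').2 hle)
  rcases abs_crossing hX hY ((hw a b (H.ne_of_adj hab)).1 hab)
    ((hw a' b' (H.ne_of_adj ha'b')).1 ha'b') with h | h
  · exact hab' ((hw a b' (hH.disjoint.ne_of_mem ha hb')).2 h)
  · exact ha'b ((hw a' b (hH.disjoint.ne_of_mem ha' hb)).2 h)

lemma isChain_neighborSet_of_unique (hH : H.IsBipartiteWith X Y)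
    (huniq : ∀ H' : SimpleGraph V, H'.IsBipartiteWith X Y → (∀ v, deg H' v = deg H v) → H' = H) :
    IsChain (· ⊆ ·) (H.neighborSet '' X) := by
  refine isChain_neighborSet_of_forall_adj fun a ha a' ha' b b' haa' hbb' hab ha'b' => ?_
  by_contra! ⟨hab', ha'b⟩
  have hb := hH.mem_of_mem_adj ha hab
  have hb' := hH.mem_of_mem_adj ha' ha'b'
  have hbip : (H.switch a b a' b').IsBipartiteWith X Y := by
    refine ⟨hH.disjoint, fun x y hxy => ?_⟩
    rcases switch_le H a b a' b' hxy with hxy | hxy | hxy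
    · exact hH.mem_of_adj hxy
    all_goals rw [edge_adj] at hxy; grind
  have hdeg := deg_switch (H.ne_of_adj hab) haa' (hH.disjoint.ne_of_mem ha hb')
    (hH.disjoint.ne_of_mem ha' hb).symm hbb' (hH.disjoint.ne_of_mem ha' hb') hab ha'b'
    (fun h => ha'b h.symm) (fun h => hab' h.symm)
  have hadj : (H.switch a b a' b').Adj b' a := switch_adj_of_ne (hH.disjoint.ne_of_mem ha hb').symm
  rw [huniq _ hbip hdeg] at hadj
  exact hab' hadj.symm

lemma isDifference_of_int (t : ℤ) (w : V → ℤ) (hw : ∀ v, |w v| ≤ t)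
    (hadj : ∀ u v, u ≠ v → (H.Adj u v ↔ t ≤ |w u - w v|)) : IsDifference H :=
  ⟨t, fun v => w v, fun v => by simp only [← Int.cast_abs, Int.cast_le, hw], fun u v huv => by
    simp only [← Int.cast_sub, ← Int.cast_abs, Int.cast_le]
    exact hadj u v huv⟩

def IsThresholdWeighting (H : SimpleGraph V) (X Y : Set V) (p : V → ℤ) : Prop :=
  ∀ a ∈ X, ∀ b ∈ Y, p a + p b ≠ 0 ∧ (H.Adj a b ↔ 0 < p a + p b)

lemma exists_adj_iff_le_deg_of_isChain [Finite V] (hc : IsChain (· ⊆ ·) (H.neighborSet '' X)) :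
    ∃ c : V → ℕ, ∀ a ∈ X, ∀ b, H.Adj a b ↔ c b ≤ deg H a := by
  obtain ⟨M, hM⟩ := Finite.exists_le (deg H)
  have hne : ∀ b, {k | ∀ a ∈ X, k ≤ deg H a → H.Adj a b}.Nonempty := fun b =>
    ⟨M + 1, fun a _ h => absurd (hM a) (by omega)⟩
  refine ⟨fun b => sInf {k | ∀ a ∈ X, k ≤ deg H a → H.Adj a b}, fun a ha b =>
    ⟨fun hab => Nat.sInf_le fun a' ha' hle => ?_, fun h => Nat.sInf_mem (hne b) a ha h⟩⟩
  have hsub : H.neighborSet a ⊆ H.neighborSet a' :=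
    subset_of_ncard_le_of_total (toFinite _)
      (hc.total (mem_image_of_mem _ ha) (mem_image_of_mem _ ha')) hle
  exact hsub hab

lemma exists_isThresholdWeighting_of_isChain [Finite V] (hXY : Disjoint X Y)
    (hc : IsChain (· ⊆ ·) (H.neighborSet '' X)) : ∃ p, IsThresholdWeighting H X Y p := by
  classical
  obtain ⟨c, hc⟩ := exists_adj_iff_le_deg_of_isChain hc
  refine ⟨fun v => if v ∈ X then 2 * deg H v + 1 else -2 * c v, fun a ha b hb => ?_⟩
  simp only [if_pos ha, if_neg (hXY.notMem_of_mem_right hb), hc a ha b]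
  omega

namespace IsThresholdWeighting

variable {p : V → ℤ}

lemma of_mem (hp : IsThresholdWeighting H X Y p) {x y : V}
    (hxy : x ∈ X ∧ y ∈ Y ∨ x ∈ Y ∧ y ∈ X) : p x + p y ≠ 0 ∧ (H.Adj x y ↔ 0 < p x + p y) := by
  rcases hxy with ⟨hx, hy⟩ | ⟨hx, hy⟩
  · exact hp x hx y hy
  · rw [add_comm, H.adj_comm]
    exact hp y hy x hx

lemma eq_of_deg_eq [Fintype V] (hp : IsThresholdWeighting H X Y p) (hH : H.IsBipartiteWith X Y)
    {H' : SimpleGraph V} (hH' : H'.IsBipartiteWith X Y) (hdeg : ∀ v, deg H' v = deg H v) :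
    H' = H := by
  refine eq_of_deg_eq_of_weight p (fun x y h => (hp.of_mem (hH.mem_of_adj h)).2.1 h)
    (fun x y h hn => ?_) hdeg
  obtain ⟨hne, hiff⟩ := hp.of_mem (hH'.mem_of_adj h)
  exact lt_of_le_of_ne (not_lt.1 (mt hiff.2 hn)) hne

lemma isDifference [Finite V] (hp : IsThresholdWeighting H X Y p) (hH : H.IsBipartiteWith X Y)
    (hunion : X ∪ Y = univ) : IsDifference H := by
  classical
  obtain ⟨M, hM⟩ := Finite.exists_le fun v => |p v|
  have hp_bound : ∀ v, -M ≤ p v ∧ p v ≤ M := fun v => abs_le.1 (hM v)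
  have hmem : ∀ v, v ∈ X ∨ v ∈ Y := fun v => hunion.ge (mem_univ v)
  -- `X` is placed in `(0, 2N)`, `Y` in `(-2N, 0)`, with `w a - w b = 2N + (p a + p b)`
  set N : ℤ := M + 1
  let w : V → ℤ := fun v => if v ∈ X then N + p v else -N - p v
  refine isDifference_of_int (2 * N) w (fun v => ?_) fun u v huv => ?_
  · have := hp_bound v
    simp only [w, abs_le]
    split_ifs <;> constructor <;> linarith
  have hu := hp_bound u
  have hv := hp_bound v
  rcases hmem u with hu' | hu' <;> rcases hmem v with hv' | hv'
  · refine iff_of_false (hH.not_adj_of_mem_left hu' hv') ?_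
    simp only [w, if_pos hu', if_pos hv', not_le, abs_lt]
    constructor <;> linarith
  · obtain ⟨hne, hiff⟩ := hp u hu' v hv'
    simp only [w, if_pos hu', if_neg (hH.disjoint.notMem_of_mem_right hv'), hiff]
    rw [abs_of_pos (by linarith)]
    omega
  · obtain ⟨hne, hiff⟩ := hp v hv' u hu'
    simp only [w, if_pos hv', if_neg (hH.disjoint.notMem_of_mem_right hu'), H.adj_comm u, hiff]
    rw [abs_of_neg (by linarith)]
    omega
  · refine iff_of_false (hH.not_adj_of_mem_right hu' hv') ?_
    simp only [w, if_neg (hH.disjoint.notMem_of_mem_right hu'),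
      if_neg (hH.disjoint.notMem_of_mem_right hv'), not_le, abs_lt]
    constructor <;> linarith

end IsThresholdWeighting

end

/-- A bipartitioned graph `H` with partite sets `X` and `Y` is a difference graph iff
`H` is the only bipartite graph with partite sets `X` and `Y` in which every vertex
has its given degree. -/
theorem stmt15 {V : Type*} [Fintype V] (X Y : Set V)
    (hdisj : Disjoint X Y) (hunion : X ∪ Y = Set.univ)
    (H : SimpleGraph V)
    (hbip : ∀ u w, H.Adj u w → (u ∈ X ∧ w ∈ Y) ∨ (u ∈ Y ∧ w ∈ X)) :
    IsDifference H ↔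
      ∀ H' : SimpleGraph V,
        (∀ u w, H'.Adj u w → (u ∈ X ∧ w ∈ Y) ∨ (u ∈ Y ∧ w ∈ X)) →
        (∀ v, deg H' v = deg H v) → H' = H := by
  have hH : H.IsBipartiteWith X Y := ⟨hdisj, hbip⟩
  constructor
  · intro hd H' hbip' hdeg
    obtain ⟨p, hp⟩ := exists_isThresholdWeighting_of_isChain hdisj (hd.isChain_neighborSet hH)
    exact hp.eq_of_deg_eq hH ⟨hdisj, hbip'⟩ hdeg
  · intro huniq
    have hc := isChain_neighborSet_of_unique hH fun H' hH' => huniq H' hH'.mem_of_adj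
    obtain ⟨p, hp⟩ := exists_isThresholdWeighting_of_isChain hdisj hc
    exact hp.isDifference hH hunion
end

section
/- Let G and H be finite simple graphs each on n ≥ 3 vertices, and let σ be a bijection from the vertex set of G to the vertex set of H such that for every vertex v of G, the vertex-deleted subgraph G − v is isomorphic to H − σ(v). Then for every vertex v of G, deg_G(v) = deg_H(σ(v)), and the multiset of degrees in G of the neighbors of v equals the multiset of degrees in H of the neighbors of σ(v); in particular, G and H have the same degree sequence and the same neighborhood degree list. -/
/-- The neighborhood degree list of a vertex `v`: the multiset of the degrees
(in `G`) of the neighbors of `v`. -/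
noncomputable def NDL {V : Type*} [Fintype V] (G : SimpleGraph V) (v : V) : Multiset ℕ :=
  ((G.neighborSet v).toFinite.toFinset).val.map (deg G)

/-!
Deleting `v` from `G` removes `deg v` edges, so the degree sum of the card `G - v` is
`2|E(G)| - 2 deg v`. Summing over `v` recovers `(n - 2)|E(G)|` from the deck, hence `|E(G)|`
when `n ≥ 3`, and then every `deg v`.

Deleting `v` lowers by one exactly the degrees of the neighbours of `v`. Writing `n_k` for the
number of neighbours of `v` of degree `k`, comparing the degree counts of `G` and `G - v` at `k`
determines `n_k - n_{k+1}` from data already known to agree for `G` and `H`; since `n_k = 0` for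
`k ≥ |V|`, every `n_k`, that is the multiset `NDL v`, is determined.
-/

open Finset

theorem eq_of_eventually_zero_of_add_succ_eq {f g : ℕ → ℕ} {N : ℕ}
    (hf : ∀ k, N ≤ k → f k = 0) (hg : ∀ k, N ≤ k → g k = 0)
    (h : ∀ k, f k + g (k + 1) = g k + f (k + 1)) : f = g := by
  suffices ∀ i k, N ≤ k + i → f k = g k from funext fun k => this N k (by omega)
  intro i
  induction i with
  | zero => intro k hk; rw [hf k hk, hg k hk]
  | succ i ih =>
    intro k hk
    have := ih (k + 1) (by omega)
    have := h k
    omega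

theorem natCard_subtype_eq_sum_ite {α : Type*} [Fintype α] (p : α → Prop) [DecidablePred p] :
    Nat.card {a // p a} = ∑ a, if p a then 1 else 0 := by
  rw [Nat.card_eq_fintype_card, Fintype.card_subtype, card_filter]

def IsHypomorphism {V W : Type*} (G : SimpleGraph V) (H : SimpleGraph W) (σ : V ≃ W) : Prop :=
  ∀ v, Nonempty (G.induce {u | u ≠ v} ≃g H.induce {w | w ≠ σ v})

noncomputable def degCount {V : Type*} (G : SimpleGraph V) (k : ℕ) : ℕ :=
  Nat.card {u // deg G u = k}

noncomputable def nbrDegCount {V : Type*} (G : SimpleGraph V) (v : V) (k : ℕ) : ℕ :=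
  Nat.card {u // G.Adj v u ∧ deg G u = k}

theorem deg_eq_of_iso {V W : Type*} {G : SimpleGraph V} {H : SimpleGraph W} (f : G ≃g H)
    (v : V) : deg H (f v) = deg G v := by
  simp only [deg, ← Nat.card_coe_set_eq]
  exact Nat.card_congr (f.mapNeighborSet v).symm

section Degree

variable {V : Type*} (G : SimpleGraph V)

theorem deg_eq_natCard_adj (v : V) : deg G v = Nat.card {u // G.Adj v u} :=
  (Nat.card_coe_set_eq _).symm

theorem deg_lt_natCard [Finite V] (v : V) : deg G v < Nat.card V :=
  Set.ncard_lt_card fun h => G.irrefl (h ▸ Set.mem_univ v : v ∈ G.neighborSet v)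

open Classical in
theorem deg_induce_ne_add_ite [Finite V] (v : V) (u : {x // x ≠ v}) :
    deg (G.induce {x | x ≠ v}) u + (if G.Adj v u then 1 else 0) = deg G u := by
  have hdel : deg (G.induce {x | x ≠ v}) u = (G.neighborSet u \ {v}).ncard := by
    rw [deg, ← Set.ncard_image_of_injective _ Subtype.val_injective]
    congr 1
    ext x
    simp
  rw [hdel]
  split_ifs with h
  · exact Set.ncard_sdiff_singleton_add_one h.symm (Set.toFinite _)
  · rw [Set.sdiff_singleton_eq_self fun hv => h hv.symm, deg, add_zero]

open Classical in
theorem sum_deg_induce_ne_add_two_mul_deg [Fintype V] (v : V) :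
    ∑ u : {x // x ≠ v}, deg (G.induce {x | x ≠ v}) u + 2 * deg G v = ∑ u, deg G u := by
  have hadj : ∑ u : {x // x ≠ v}, (if G.Adj v u then 1 else 0) = deg G v := by
    rw [deg_eq_natCard_adj, natCard_subtype_eq_sum_ite, Fintype.sum_eq_add_sum_subtype_ne _ v]
    simp
  calc ∑ u : {x // x ≠ v}, deg (G.induce {x | x ≠ v}) u + 2 * deg G v
      = ∑ u : {x // x ≠ v}, (deg (G.induce {x | x ≠ v}) u + if G.Adj v u then 1 else 0)
        + deg G v := by rw [sum_add_distrib, hadj]; ring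
    _ = ∑ u, deg G u := by
      simp only [deg_induce_ne_add_ite, Fintype.sum_eq_add_sum_subtype_ne (deg G) v]; ring

end Degree

section Counting

variable {V W : Type*} (G : SimpleGraph V)

theorem degCount_congr {H : SimpleGraph W} (e : V ≃ W) (he : ∀ u, deg H (e u) = deg G u) :
    degCount H = degCount G :=
  funext fun k => Nat.card_congr (e.subtypeEquiv fun u => by rw [he]).symm

theorem nbrDegCount_eq_zero [Finite V] (v : V) {k : ℕ} (hk : Nat.card V ≤ k) :
    nbrDegCount G v k = 0 := by
  have : IsEmpty {u // G.Adj v u ∧ deg G u = k} :=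
    ⟨fun ⟨u, _, hu⟩ => by have := deg_lt_natCard G u; omega⟩
  exact Nat.card_of_isEmpty

theorem count_ndl [Fintype V] (v : V) (k : ℕ) : (NDL G v).count k = nbrDegCount G v k := by
  classical
  rw [NDL, Multiset.count_map, ← Finset.filter_val, ← Finset.card_def, nbrDegCount,
    Nat.card_eq_fintype_card, Fintype.card_subtype]
  congr 1
  ext u
  simp [eq_comm]

open Classical in
theorem degCount_add_nbrDegCount_succ [Fintype V] (v : V) (k : ℕ) :
    degCount G k + nbrDegCount G v (k + 1) =
      degCount (G.induce {x | x ≠ v}) k + (if deg G v = k then 1 else 0) + nbrDegCount G v k := by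
  have hdeck : degCount (G.induce {x | x ≠ v}) k =
      ∑ u : {x // x ≠ v}, if deg (G.induce {x | x ≠ v}) u = k then 1 else 0 :=
    natCard_subtype_eq_sum_ite _
  rw [hdeck]
  simp only [degCount, nbrDegCount, natCard_subtype_eq_sum_ite,
    Fintype.sum_eq_add_sum_subtype_ne _ v, G.irrefl, false_and, if_false, zero_add]
  rw [add_assoc, ← sum_add_distrib, add_right_comm, ← sum_add_distrib, add_comm]
  congr 1
  refine sum_congr rfl fun u _ => ?_
  have hu := deg_induce_ne_add_ite G v u
  by_cases hadj : G.Adj v u <;>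
    simp only [hadj, true_and, false_and, if_true, if_false] at hu ⊢ <;> split_ifs <;> omega

end Counting

namespace IsHypomorphism

variable {V W : Type*} [Fintype V] [Fintype W] {G : SimpleGraph V} {H : SimpleGraph W}
  {σ : V ≃ W}

open Classical in
theorem sum_deg_induce_eq (hσ : IsHypomorphism G H σ) (v : V) :
    ∑ u : {x // x ≠ v}, deg (G.induce {x | x ≠ v}) u =
      ∑ w : {x // x ≠ σ v}, deg (H.induce {x | x ≠ σ v}) w :=
  Fintype.sum_equiv (hσ v).some.toEquiv _ _ fun u => (deg_eq_of_iso (hσ v).some u).symm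

theorem sum_deg_add_two_mul_deg (hσ : IsHypomorphism G H σ) (v : V) :
    ∑ u, deg G u + 2 * deg H (σ v) = ∑ w, deg H w + 2 * deg G v := by
  classical
  have hG := sum_deg_induce_ne_add_two_mul_deg G v
  have hH := sum_deg_induce_ne_add_two_mul_deg H (σ v)
  have hdeck := hσ.sum_deg_induce_eq v
  omega

theorem sum_deg_eq (hσ : IsHypomorphism G H σ) (hn : 3 ≤ Fintype.card V) :
    ∑ u, deg G u = ∑ w, deg H w := by
  have h := sum_congr rfl fun v (_ : v ∈ univ) => hσ.sum_deg_add_two_mul_deg v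
  simp only [sum_add_distrib, sum_const, card_univ, smul_eq_mul, ← mul_sum,
    Equiv.sum_comp σ (deg H)] at h
  obtain ⟨m, hm⟩ : ∃ m, Fintype.card V = m + 3 := ⟨_, (Nat.sub_add_cancel hn).symm⟩
  rw [hm] at h
  exact Nat.eq_of_mul_eq_mul_left (Nat.succ_pos m) (by linarith)

theorem deg_apply_eq (hσ : IsHypomorphism G H σ) (hn : 3 ≤ Fintype.card V) (v : V) :
    deg H (σ v) = deg G v := by
  have := hσ.sum_deg_add_two_mul_deg v
  have := hσ.sum_deg_eq hn
  omega

theorem ndl_apply_eq (hσ : IsHypomorphism G H σ) (hn : 3 ≤ Fintype.card V) (v : V) :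
    NDL H (σ v) = NDL G v := by
  have hdeg := hσ.deg_apply_eq hn
  have hcard : Nat.card W = Nat.card V := Nat.card_congr σ.symm
  have hdegCount : degCount H = degCount G := degCount_congr G σ hdeg
  have hdeck : degCount (H.induce {x | x ≠ σ v}) = degCount (G.induce {x | x ≠ v}) :=
    degCount_congr _ (hσ v).some.toEquiv (deg_eq_of_iso (hσ v).some)
  ext k
  rw [count_ndl, count_ndl]
  suffices nbrDegCount H (σ v) = nbrDegCount G v from congrFun this k
  refine eq_of_eventually_zero_of_add_succ_eq (N := Nat.card V)
    (fun j hj => nbrDegCount_eq_zero H (σ v) (hcard ▸ hj))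
    (fun j hj => nbrDegCount_eq_zero G v hj) fun j => ?_
  have hG := degCount_add_nbrDegCount_succ G v j
  have hH := degCount_add_nbrDegCount_succ H (σ v) j
  rw [hdegCount, hdeck, hdeg] at hH
  omega

end IsHypomorphism

/-- If `G` and `H` are graphs on `n ≥ 3` vertices and `σ` is a hypomorphism
(a bijection with `G - v ≅ H - σ v` for every vertex `v`), then every vertex has the
same degree and the same neighborhood degree list as its image; in particular `G`
and `H` have the same degree sequence and the same neighborhood degree list. -/
theorem stmt18 {V W : Type*} [Fintype V] [Fintype W]
    (G : SimpleGraph V) (H : SimpleGraph W) (hn : 3 ≤ Fintype.card V)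
    (σ : V ≃ W)
    (hcards : ∀ v : V,
      Nonempty ((G.induce {u : V | u ≠ v}) ≃g (H.induce {w : W | w ≠ σ v}))) :
    ∀ v : V, deg G v = deg H (σ v) ∧ NDL G v = NDL H (σ v) := fun v =>
  ⟨(IsHypomorphism.deg_apply_eq hcards hn v).symm, (IsHypomorphism.ndl_apply_eq hcards hn v).symm⟩
end
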